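/- For n ≥ m ≥ 3 with n > 2(m−1), the m-degree of the total graph T(S_n □ S_m) equals 2m + n + 1. -/

import Mathlib

/-!
In a total graph `T(G)` a vertex `v` has degree `2 deg v` and an edge `uv` has degree
`deg u + deg v`, and in `S_n □ S_m` the vertex `(a, b)` has degree `deg a + deg b`.
So the `2m + n + 1` "hubs" of `T(S_n □ S_m)` (the vertices `(0, b)` and the edges at the
centre `(0, 0)`) have degree at least `2m + n`, which is where `n > 2(m - 1)` enters, while every
other element has degree at most `max (2m + 2) (n + 3) ≤ 2m + n`. Whenever the elements of degree
at least `k` are exactly `k` elements of degree at least `k - 1`, the m-degree is `k`.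
-/

open SimpleGraph

/-- The star graph with a central vertex `0` and `n` leaves. -/
def starGraph (n : ℕ) : SimpleGraph (Fin (n+1)) where
  Adj u v := u ≠ v ∧ (u = 0 ∨ v = 0)
  symm := by
    constructor
    intro u v h
    exact ⟨h.1.symm, h.2.symm⟩
  loopless := by
    constructor
    intro u h
    exact h.1 rfl

/-- A proper coloring with `k` colors which is a b-coloring: every color class
contains a vertex adjacent to at least one vertex of every other color class. -/
def IsBColoring {V : Type*} (G : SimpleGraph V) (k : ℕ) (c : V → Fin k) : Prop :=
  (∀ u v, G.Adj u v → c u ≠ c v) ∧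
    ∀ i : Fin k, ∃ v, c v = i ∧ ∀ j : Fin k, j ≠ i → ∃ u, G.Adj v u ∧ c u = j

/-- `G` admits a b-coloring with `k` colors. -/
def HasBColoring {V : Type*} (G : SimpleGraph V) (k : ℕ) : Prop :=
  ∃ c : V → Fin k, IsBColoring G k c

/-- The set of `k` such that `G` has a b-coloring with `k` colors.  The
b-chromatic number of `G` is the greatest element of this set. -/
def bChromaticSet {V : Type*} (G : SimpleGraph V) : Set ℕ :=
  {k | HasBColoring G k}

/-- The set of `i` such that `G` has at least `i` vertices of degree at least `i - 1`.
The m-degree of `G` is the greatest element of this set. -/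
def mDegreeSet {V : Type*} (G : SimpleGraph V) : Set ℕ :=
  {i | ∃ S : Set V, S.Finite ∧ S.ncard = i ∧ ∀ v ∈ S, i - 1 ≤ (G.neighborSet v).ncard}

/-- The line graph of `G`: vertices are the edges of `G`, two being adjacent iff
they are distinct and share an endpoint. -/
def lineGraph {V : Type*} (G : SimpleGraph V) : SimpleGraph G.edgeSet where
  Adj e f := e ≠ f ∧ ∃ v, v ∈ (e : Sym2 V) ∧ v ∈ (f : Sym2 V)
  symm := by
    constructor
    rintro e f ⟨hne, v, hv1, hv2⟩
    exact ⟨hne.symm, v, hv2, hv1⟩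
  loopless := by
    constructor
    rintro e ⟨hne, -⟩
    exact hne rfl

/-- The total graph of `G`: vertices are `V(G) ⊕ E(G)`; adjacency is vertex
adjacency, vertex-edge incidence, or edge adjacency. -/
def totalGraph {V : Type*} (G : SimpleGraph V) : SimpleGraph (V ⊕ G.edgeSet) where
  Adj x y :=
    match x, y with
    | .inl u, .inl v => G.Adj u v
    | .inl u, .inr e => u ∈ (e : Sym2 V)
    | .inr e, .inl u => u ∈ (e : Sym2 V)
    | .inr e, .inr f => e ≠ f ∧ ∃ v, v ∈ (e : Sym2 V) ∧ v ∈ (f : Sym2 V)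
  symm := by
    constructor
    rintro (u | e) (v | f) h
    · exact h.symm
    · exact h
    · exact h
    · exact ⟨h.1.symm, h.2.choose, h.2.choose_spec.2, h.2.choose_spec.1⟩
  loopless := by
    constructor
    rintro (u | e) h
    · exact G.irrefl h
    · exact h.1 rfl

/-- The `p`-th power of `G`: same vertices, `u ~ v` iff `0 < d(u,v) ≤ p`. -/
def graphPower {V : Type*} (G : SimpleGraph V) (p : ℕ) : SimpleGraph V where
  Adj u v := 0 < G.dist u v ∧ G.dist u v ≤ p
  symm := by
    constructor
    intro u v h
    rwa [SimpleGraph.dist_comm]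
  loopless := by
    constructor
    intro u h
    simp [SimpleGraph.dist_self] at h

open Set Sum

theorem Set.ncard_inl_image_union_inr_image {α β : Type*} {s : Set α} {t : Set β}
    (hs : s.Finite) (ht : t.Finite) :
    (inl '' s ∪ inr '' t : Set (α ⊕ β)).ncard = s.ncard + t.ncard := by
  rw [ncard_union_eq disjoint_image_inl_image_inr (hs.image _) (ht.image _),
    ncard_image_of_injective _ inl_injective, ncard_image_of_injective _ inr_injective]

theorem isGreatest_mDegreeSet_of_ncard_eq {V : Type*} {G : SimpleGraph V} {B : Set V} {k : ℕ}
    (hB : B.Finite) (hcard : B.ncard = k) (hin : ∀ v ∈ B, k - 1 ≤ (G.neighborSet v).ncard)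
    (hout : ∀ v ∉ B, (G.neighborSet v).ncard < k) : IsGreatest (mDegreeSet G) k := by
  refine ⟨⟨B, hB, hcard, hin⟩, ?_⟩
  rintro i ⟨S, -, rfl, hS⟩
  by_contra! hlt
  have hSB : S ⊆ B := fun v hv => by_contra fun hvB => by
    have := hS v hv
    have := hout v hvB
    omega
  have := ncard_le_ncard hSB hB
  omega

namespace SimpleGraph

variable {V : Type*} {G : SimpleGraph V}

theorem ncard_neighborSet_eq_degree [G.LocallyFinite] (v : V) :
    (G.neighborSet v).ncard = G.degree v := by
  rw [← card_neighborSet_eq_degree, ← Nat.card_eq_fintype_card, Nat.card_coe_set_eq]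

theorem nonempty_incidentEdges_equiv_neighborSet (v : V) :
    Nonempty ({e : G.edgeSet | v ∈ (e : Sym2 V)} ≃ G.neighborSet v) := by
  classical
  exact ⟨(Equiv.subtypeSubtypeEquivSubtypeInter (· ∈ G.edgeSet) (v ∈ ·)).trans
    (G.incidenceSetEquivNeighborSet v)⟩

theorem finite_incidentEdges [G.LocallyFinite] (v : V) :
    {e : G.edgeSet | v ∈ (e : Sym2 V)}.Finite :=
  have ⟨φ⟩ := nonempty_incidentEdges_equiv_neighborSet (G := G) v
  Finite.of_equiv _ φ.symm

theorem ncard_incidentEdges [G.LocallyFinite] (v : V) :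
    {e : G.edgeSet | v ∈ (e : Sym2 V)}.ncard = G.degree v := by
  obtain ⟨φ⟩ := nonempty_incidentEdges_equiv_neighborSet (G := G) v
  rw [← ncard_neighborSet_eq_degree, ← Nat.card_coe_set_eq, ← Nat.card_coe_set_eq,
    Nat.card_congr φ]

theorem totalGraph_neighborSet_inl (v : V) :
    (totalGraph G).neighborSet (inl v) =
      inl '' G.neighborSet v ∪ inr '' {e : G.edgeSet | v ∈ (e : Sym2 V)} := by
  ext (w | e) <;> simp [totalGraph]

theorem totalGraph_neighborSet_inr (e : G.edgeSet) :
    (totalGraph G).neighborSet (inr e) =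
      inl '' {v | v ∈ (e : Sym2 V)} ∪
        inr '' {f | f ≠ e ∧ ∃ v, v ∈ (e : Sym2 V) ∧ v ∈ (f : Sym2 V)} := by
  ext (w | f) <;> simp [totalGraph, ne_comm]

theorem ncard_neighborSet_totalGraph_inl [G.LocallyFinite] (v : V) :
    ((totalGraph G).neighborSet (inl v)).ncard = 2 * G.degree v := by
  rw [totalGraph_neighborSet_inl,
    ncard_inl_image_union_inr_image (toFinite _) (finite_incidentEdges v),
    ncard_neighborSet_eq_degree, ncard_incidentEdges, two_mul]

theorem ncard_neighborSet_totalGraph_inr [G.LocallyFinite] {u v : V} (h : G.Adj u v) :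
    ((totalGraph G).neighborSet (inr ⟨s(u, v), h⟩)).ncard = G.degree u + G.degree v := by
  set e : G.edgeSet := ⟨s(u, v), h⟩
  set A := {f : G.edgeSet | u ∈ (f : Sym2 V)}
  set B := {f : G.edgeSet | v ∈ (f : Sym2 V)}
  have hends : {w | w ∈ (e : Sym2 V)} = {u, v} := by ext; simp [e]
  have hedges : {f | f ≠ e ∧ ∃ w, w ∈ (e : Sym2 V) ∧ w ∈ (f : Sym2 V)} = (A ∪ B) \ {e} := by
    ext f; simp [e, A, B, and_comm]
  have hAB : A ∩ B = {e} := by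
    ext f; simp [A, B, e, Sym2.mem_and_mem_iff h.ne, Subtype.ext_iff]
  have heA : e ∈ A := by simp [A, e]
  have hfin : (A ∪ B).Finite := (finite_incidentEdges u).union (finite_incidentEdges v)
  have hpos : 1 ≤ (A ∪ B).ncard := (ncard_pos hfin).2 ⟨e, Or.inl heA⟩
  have hcount := ncard_union_add_ncard_inter A B (finite_incidentEdges u) (finite_incidentEdges v)
  rw [hAB, ncard_singleton, ncard_incidentEdges, ncard_incidentEdges] at hcount
  rw [totalGraph_neighborSet_inr, hends, hedges,
    ncard_inl_image_union_inr_image (toFinite _) hfin.sdiff, ncard_pair h.ne,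
    ncard_sdiff_singleton_of_mem (s := A ∪ B) (Or.inl heA)]
  omega

end SimpleGraph

instance (n : ℕ) : DecidableRel (_root_.starGraph n).Adj :=
  fun _ _ => inferInstanceAs (Decidable (_ ∧ _))

theorem starGraph_degree (n : ℕ) (a : Fin (n + 1)) :
    (_root_.starGraph n).degree a = if a = 0 then n else 1 := by
  split_ifs with ha
  · subst ha
    have : (_root_.starGraph n).neighborFinset 0 = Finset.univ.erase 0 := by
      ext b; rw [mem_neighborFinset]; simp [_root_.starGraph, eq_comm]
    simp [degree, this]
  · have : (_root_.starGraph n).neighborFinset a = {0} := by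
      ext b; rw [mem_neighborFinset]; simp only [_root_.starGraph, ne_eq, Finset.mem_singleton]; grind
    simp [degree, this]

abbrev starBox (n m : ℕ) : SimpleGraph (Fin (n + 1) × Fin (m + 1)) :=
  (_root_.starGraph n).boxProd (_root_.starGraph m)

theorem starBox_degree (n m : ℕ) (p : Fin (n + 1) × Fin (m + 1)) :
    (starBox n m).degree p = (if p.1 = 0 then n else 1) + (if p.2 = 0 then m else 1) := by
  rw [degree_boxProd, starGraph_degree, starGraph_degree]

theorem fst_eq_zero_or_snd_eq_zero_of_starBox_adj_zero {n m : ℕ} {p : Fin (n + 1) × Fin (m + 1)}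
    (h : (starBox n m).Adj 0 p) : p.1 = 0 ∨ p.2 = 0 := by
  simp only [boxProd_adj, _root_.starGraph, ne_eq, Prod.fst_zero, true_or, and_true,
    Prod.snd_zero] at h
  tauto

theorem starBox_degree_add_degree_le {n m : ℕ} (hmn : m ≤ n) {p q : Fin (n + 1) × Fin (m + 1)}
    (h : (starBox n m).Adj p q) (hp : p ≠ 0) (hq : q ≠ 0) :
    (starBox n m).degree p + (starBox n m).degree q ≤ n + 3 := by
  obtain ⟨a, b⟩ := p
  obtain ⟨a', b'⟩ := q
  simp only [starBox_degree]
  simp only [boxProd_adj, _root_.starGraph, ne_eq, Prod.ext_iff, Prod.fst_zero, Prod.snd_zero,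
    not_and] at h hp hq
  rcases h with ⟨⟨hne, rfl | rfl⟩, rfl⟩ | ⟨⟨hne, rfl | rfl⟩, rfl⟩ <;>
    split_ifs <;> simp_all <;> omega

def starBoxHubs (n m : ℕ) : Set ((Fin (n + 1) × Fin (m + 1)) ⊕ (starBox n m).edgeSet) :=
  inl '' {p | p.1 = 0} ∪ inr '' {e | (0 : Fin (n + 1) × Fin (m + 1)) ∈ (e : Sym2 _)}

theorem ncard_starBoxHubs (n m : ℕ) : (starBoxHubs n m).ncard = 2 * m + n + 1 := by
  have hcol : {p : Fin (n + 1) × Fin (m + 1) | p.1 = 0} = range (Prod.mk 0) := by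
    ext ⟨a, b⟩; simp [eq_comm]
  rw [starBoxHubs, ncard_inl_image_union_inr_image (toFinite _) (finite_incidentEdges _),
    ncard_incidentEdges, starBox_degree, hcol,
    ncard_range_of_injective (Prod.mk_right_injective 0)]
  simp only [Nat.card_eq_fintype_card, Fintype.card_fin, Prod.fst_zero, ↓reduceIte,
    Prod.snd_zero]
  omega

variable {n m : ℕ} {x : (Fin (n + 1) × Fin (m + 1)) ⊕ (starBox n m).edgeSet}

theorem le_ncard_neighborSet_of_mem_starBoxHubs (h : 2 * (m - 1) < n)
    (hx : x ∈ starBoxHubs n m) :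
    2 * m + n ≤ ((totalGraph (starBox n m)).neighborSet x).ncard := by
  rcases hx with ⟨p, hp, rfl⟩ | ⟨⟨e, he⟩, h0, rfl⟩
  · rw [ncard_neighborSet_totalGraph_inl, starBox_degree, if_pos (show p.1 = 0 from hp)]
    split_ifs <;> omega
  · obtain ⟨q, rfl⟩ := Sym2.mem_iff_exists.mp h0
    have hq := fst_eq_zero_or_snd_eq_zero_of_starBox_adj_zero he
    rw [ncard_neighborSet_totalGraph_inr he, starBox_degree, starBox_degree]
    simp only [Prod.fst_zero, Prod.snd_zero, if_true]
    split_ifs <;> simp_all <;> omega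

theorem ncard_neighborSet_lt_of_notMem_starBoxHubs (hm : 2 ≤ m) (h : 2 * (m - 1) < n)
    (hx : x ∉ starBoxHubs n m) :
    ((totalGraph (starBox n m)).neighborSet x).ncard < 2 * m + n + 1 := by
  rcases x with p | ⟨⟨⟨u, w⟩⟩, huw⟩
  · have hp : p.1 ≠ 0 := fun hp => hx (Or.inl ⟨p, hp, rfl⟩)
    rw [ncard_neighborSet_totalGraph_inl, starBox_degree, if_neg hp]
    split_ifs <;> omega
  · have h0 : (0 : Fin (n + 1) × Fin (m + 1)) ∉ s(u, w) := fun h0 => hx (Or.inr ⟨_, h0, rfl⟩)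
    rw [Sym2.mem_iff, not_or] at h0
    have := starBox_degree_add_degree_le (p := u) (q := w) (by omega) huw
      (Ne.symm h0.1) (Ne.symm h0.2)
    rw [ncard_neighborSet_totalGraph_inr huw]
    omega

theorem mDegree_totalGraph_boxProd_star_large_general (n m : ℕ) (hm : 3 ≤ m)
    (h : 2 * (m - 1) < n) :
    IsGreatest (mDegreeSet (totalGraph ((_root_.starGraph n).boxProd (_root_.starGraph m)))) (2 * m + n + 1) :=
  isGreatest_mDegreeSet_of_ncard_eq (toFinite _) (ncard_starBoxHubs n m)
    (fun _ hx => le_ncard_neighborSet_of_mem_starBoxHubs h hx)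
    (fun _ hx => ncard_neighborSet_lt_of_notMem_starBoxHubs (by omega) h hx)

theorem mDegree_totalGraph_boxProd_star_large (n m : ℕ) (hm : 3 ≤ m) (hmn : m ≤ n)
    (h : 2 * (m - 1) < n) :
    IsGreatest (mDegreeSet (totalGraph ((_root_.starGraph n).boxProd (_root_.starGraph m)))) (2 * m + n + 1) :=
  mDegree_totalGraph_boxProd_star_large_general n m hm h
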